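/- Assume Condition 1 holds. Then inf over {a : ‖a‖=1} of MSE_0(a,D) tends to +∞ as ‖D‖_F tends to +∞; that is, for every R > 0 there exists M such that ‖D‖_F ≥ M implies inf_{‖a‖=1} MSE_0(a,D) ≥ R. -/

import Mathlib

/-!
The quadratic form `v ↦ v'S(a)v = 𝔼[(v ⬝ w_t(a))²]` is jointly continuous in `(a, v)`, being a
polynomial in their coordinates with second moments of `z` as coefficients, and Condition 1 makes
it positive for `‖a‖ = 1`, `v ≠ 0`. Compactness of the unit spheres and homogeneity in `v` then
give `c > 0` with `v'S(a)v ≥ c‖v‖²` for all unit `a`. The `j`-th coordinate of `z_t^R(a,D)` is the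
`j`-th column of `D` against `w_t(a)`, so `(z - r)² ≥ r²/2 - z²` yields
`MSE₀(a,D) ≥ (c/2)‖D‖_F² - 𝔼‖z_t‖²` uniformly in `a`.
-/

open MeasureTheory Filter

noncomputable section

namespace ODPC

variable {Ω : Type*} [MeasurableSpace Ω]

/-- Frobenius norm of a real matrix. -/
def frob {ι κ : Type*} [Fintype ι] [Fintype κ] (M : Matrix ι κ ℝ) : ℝ :=
  Real.sqrt (∑ i, ∑ j, (M i j) ^ 2)

/-- Smallest eigenvalue of a symmetric real matrix, via the Rayleigh quotient. -/
def lambdaMin {n : ℕ} (M : Matrix (Fin n) (Fin n) ℝ) : ℝ :=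
  ⨅ x : { x : EuclideanSpace ℝ (Fin n) // ‖x‖ = 1 }, ∑ i, ∑ j, x.1 i * M i j * x.1 j

/-- Largest eigenvalue of a symmetric real matrix, via the Rayleigh quotient. -/
def lambdaMax {n : ℕ} (M : Matrix (Fin n) (Fin n) ℝ) : ℝ :=
  ⨆ x : { x : EuclideanSpace ℝ (Fin n) // ‖x‖ = 1 }, ∑ i, ∑ j, x.1 i * M i j * x.1 j

variable (m k₁ k₂ : ℕ)

/-- The stationary process `z_t = Z ∘ τ^t`. -/
def zproc (Z : Ω → EuclideanSpace ℝ (Fin m)) (τ : Ω → Ω) (t : ℕ) (ω : Ω) :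
    EuclideanSpace ℝ (Fin m) := Z (τ^[t] ω)

/-- The one-sided dynamic principal component `f_t(a) = a'x_t`,
where `x_t = (z_t', …, z_{t-k₁}')`. -/
def comp (Z : Ω → EuclideanSpace ℝ (Fin m)) (τ : Ω → Ω)
    (a : EuclideanSpace ℝ (Fin (k₁ + 1) × Fin m)) (t : ℕ) (ω : Ω) : ℝ :=
  ∑ h : Fin (k₁ + 1), ∑ j : Fin m, a (h, j) * zproc m Z τ (t - h.1) ω j

/-- Reconstruction `z_t^R(a,D)`: the first row of `D` is the intercept `α`, the
remaining rows are the loadings `B`. -/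
def recon (Z : Ω → EuclideanSpace ℝ (Fin m)) (τ : Ω → Ω)
    (a : EuclideanSpace ℝ (Fin (k₁ + 1) × Fin m))
    (D : Matrix (Fin (k₂ + 2)) (Fin m) ℝ) (t : ℕ) (ω : Ω) :
    EuclideanSpace ℝ (Fin m) :=
  (WithLp.equiv 2 (Fin m → ℝ)).symm fun j =>
    D 0 j + ∑ h : Fin (k₂ + 1), D h.succ j * comp m k₁ Z τ a (t - h.1) ω

/-- Population mean squared reconstruction error `MSE₀(a,D)`. -/
def MSE₀ (μ : Measure Ω) (Z : Ω → EuclideanSpace ℝ (Fin m)) (τ : Ω → Ω)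
    (a : EuclideanSpace ℝ (Fin (k₁ + 1) × Fin m))
    (D : Matrix (Fin (k₂ + 2)) (Fin m) ℝ) : ℝ :=
  ∫ ω, ‖zproc m Z τ (k₁ + k₂) ω - recon m k₁ k₂ Z τ a D (k₁ + k₂) ω‖ ^ 2 ∂μ

/-- Sample mean squared reconstruction error `MSE_T(a,D)`. -/
def MSE (Z : Ω → EuclideanSpace ℝ (Fin m)) (τ : Ω → Ω) (T : ℕ)
    (a : EuclideanSpace ℝ (Fin (k₁ + 1) × Fin m))
    (D : Matrix (Fin (k₂ + 2)) (Fin m) ℝ) (ω : Ω) : ℝ :=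
  ((T : ℝ) - (k₁ + k₂))⁻¹ *
    ∑ t ∈ Finset.Ioc (k₁ + k₂) T,
      ‖zproc m Z τ t ω - recon m k₁ k₂ Z τ a D t ω‖ ^ 2

/-- Condition 1: no deterministic linear relation between `f_t(a), …, f_{t-k₂}(a)`
and a constant, uniformly over unit vectors `a`. -/
def Condition1 (μ : Measure Ω) (Z : Ω → EuclideanSpace ℝ (Fin m)) (τ : Ω → Ω) : Prop :=
  ∃ η : ℝ, η < 1 ∧
    ∀ a : EuclideanSpace ℝ (Fin (k₁ + 1) × Fin m), ‖a‖ = 1 →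
      ∀ v : Fin (k₂ + 2) → ℝ, v ≠ 0 →
        (μ {ω | ∑ h : Fin (k₂ + 1),
            v h.castSucc * comp m k₁ Z τ a (k₁ + k₂ - h.1) ω
              = v (Fin.last (k₂ + 1))}).toReal ≤ η

/-- The row `w_t(a) = (1, f_t(a), f_{t-1}(a), …, f_{t-k₂}(a))`. -/
def wvec (Z : Ω → EuclideanSpace ℝ (Fin m)) (τ : Ω → Ω)
    (a : EuclideanSpace ℝ (Fin (k₁ + 1) × Fin m)) (t : ℕ) (i : Fin (k₂ + 2)) (ω : Ω) : ℝ :=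
  if i.1 = 0 then 1 else comp m k₁ Z τ a (t - (i.1 - 1)) ω

/-- The population second-moment matrix `S(a) = 𝔼[w_t(a) w_t(a)']`. -/
def Smat (μ : Measure Ω) (Z : Ω → EuclideanSpace ℝ (Fin m)) (τ : Ω → Ω)
    (a : EuclideanSpace ℝ (Fin (k₁ + 1) × Fin m)) :
    Matrix (Fin (k₂ + 2)) (Fin (k₂ + 2)) ℝ :=
  fun i i' => ∫ ω, wvec m k₁ k₂ Z τ a (k₁ + k₂) i ω * wvec m k₁ k₂ Z τ a (k₁ + k₂) i' ω ∂μ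

/-- The sample second-moment matrix `F_{k₁,k₂}(a)'F_{k₁,k₂}(a)/(T-(k₁+k₂))`. -/
def Ssamp (Z : Ω → EuclideanSpace ℝ (Fin m)) (τ : Ω → Ω) (T : ℕ)
    (a : EuclideanSpace ℝ (Fin (k₁ + 1) × Fin m)) (ω : Ω) :
    Matrix (Fin (k₂ + 2)) (Fin (k₂ + 2)) ℝ :=
  fun i i' => ((T : ℝ) - (k₁ + k₂))⁻¹ *
    ∑ t ∈ Finset.Ioc (k₁ + k₂) T, wvec m k₁ k₂ Z τ a t i ω * wvec m k₁ k₂ Z τ a t i' ω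

/-- The set `𝓘` of minimizers of the population MSE. -/
def minimizers (μ : Measure Ω) (Z : Ω → EuclideanSpace ℝ (Fin m)) (τ : Ω → Ω) :
    Set ((EuclideanSpace ℝ (Fin (k₁ + 1) × Fin m)) × Matrix (Fin (k₂ + 2)) (Fin m) ℝ) :=
  {p | ‖p.1‖ = 1 ∧ ∀ a D, ‖a‖ = 1 → MSE₀ m k₁ k₂ μ Z τ p.1 p.2 ≤ MSE₀ m k₁ k₂ μ Z τ a D}

/-- The distance `d((a,D), 𝓘)`. -/
def distToMinimizers (μ : Measure Ω) (Z : Ω → EuclideanSpace ℝ (Fin m)) (τ : Ω → Ω)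
    (a : EuclideanSpace ℝ (Fin (k₁ + 1) × Fin m))
    (D : Matrix (Fin (k₂ + 2)) (Fin m) ℝ) : ℝ :=
  ⨅ p : minimizers m k₁ k₂ μ Z τ, (‖a - p.1.1‖ + frob (D - p.1.2))


section Analysis

theorem continuous_integral_sq_sum_mul {P ι : Type*} [TopologicalSpace P] [Fintype ι]
    {μ : Measure Ω} {U : ι → Ω → ℝ} (hU : ∀ s, MemLp (U s) 2 μ) {c : P → ι → ℝ}
    (hc : Continuous c) :
    Continuous fun p => ∫ ω, (∑ s, c p s * U s ω) ^ 2 ∂μ := by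
  have hUU : ∀ s s', Integrable (fun ω => U s ω * U s' ω) μ :=
    fun s s' => (hU s).integrable_mul (hU s')
  have hexp : ∀ p, ∫ ω, (∑ s, c p s * U s ω) ^ 2 ∂μ
      = ∑ s, ∑ s', c p s * c p s' * ∫ ω, U s ω * U s' ω ∂μ := by
    intro p
    have hpt : ∀ ω, (∑ s, c p s * U s ω) ^ 2
        = ∑ s, ∑ s', c p s * c p s' * (U s ω * U s' ω) := fun ω => by
      rw [sq, Finset.sum_mul_sum]
      exact Finset.sum_congr rfl fun s _ => Finset.sum_congr rfl fun s' _ => by ring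
    simp_rw [hpt]
    rw [integral_finsetSum _ fun s _ =>
      integrable_finsetSum _ fun s' _ => (hUU s s').const_mul _]
    refine Finset.sum_congr rfl fun s _ => ?_
    rw [integral_finsetSum _ fun s' _ => (hUU s s').const_mul _]
    simp_rw [integral_const_mul]
  simp_rw [hexp]
  fun_prop

theorem exists_pos_mul_norm_sq_le_of_isCompact {A V : Type*} [TopologicalSpace A]
    [NormedAddCommGroup V] [NormedSpace ℝ V] [ProperSpace V] {K : Set A} (hK : IsCompact K)
    {G : A → V → ℝ} (hG : Continuous (Function.uncurry G))
    (hsmul : ∀ a (t : ℝ) v, G a (t • v) = t ^ 2 * G a v)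
    (hpos : ∀ a ∈ K, ∀ v ≠ 0, 0 < G a v) :
    ∃ c > 0, ∀ a ∈ K, ∀ v, c * ‖v‖ ^ 2 ≤ G a v := by
  obtain ⟨c, hc, hcle⟩ := (hK.prod (isCompact_sphere (0 : V) 1)).exists_forall_le'
    hG.continuousOn fun p hp => hpos p.1 hp.1 p.2 (ne_zero_of_mem_unit_sphere ⟨p.2, hp.2⟩)
  refine ⟨c, hc, fun a ha v => ?_⟩
  rcases eq_or_ne v 0 with rfl | hv
  · simpa using (hsmul a 0 0).ge
  have hv' : 0 < ‖v‖ := norm_pos_iff.2 hv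
  have hu : ‖v‖⁻¹ • v ∈ Metric.sphere (0 : V) 1 := by
    simp [norm_smul, hv'.ne']
  calc c * ‖v‖ ^ 2 ≤ ‖v‖ ^ 2 * G a (‖v‖⁻¹ • v) := by
        rw [mul_comm]; gcongr; exact hcle (a, _) ⟨ha, hu⟩
    _ = G a v := by rw [← hsmul, smul_inv_smul₀ hv'.ne']

theorem half_integral_sq_sub_integral_sq_le {μ : Measure Ω} {f g : Ω → ℝ}
    (hf : MemLp f 2 μ) (hg : MemLp g 2 μ) :
    (∫ ω, g ω ^ 2 ∂μ) / 2 - ∫ ω, f ω ^ 2 ∂μ ≤ ∫ ω, (f ω - g ω) ^ 2 ∂μ := by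
  rw [← integral_div, ← integral_sub (hg.integrable_sq.div_const _) hf.integrable_sq]
  refine integral_mono ((hg.integrable_sq.div_const _).sub hf.integrable_sq)
    (hf.sub hg).integrable_sq fun ω => ?_
  nlinarith [sq_nonneg (2 * f ω - g ω)]

end Analysis

section Components

omit [MeasurableSpace Ω]

variable {m k₁ k₂} {Z : Ω → EuclideanSpace ℝ (Fin m)} {τ : Ω → Ω}
  {a : EuclideanSpace ℝ (Fin (k₁ + 1) × Fin m)} {t : ℕ} {ω : Ω}

theorem comp_eq_sum_prod :
    comp m k₁ Z τ a t ω = ∑ p : Fin (k₁ + 1) × Fin m, a p * zproc m Z τ (t - p.1) ω p.2 := by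
  rw [Fintype.sum_prod_type]
  rfl

theorem wvec_succ (h : Fin (k₂ + 1)) :
    wvec m k₁ k₂ Z τ a t h.succ ω = comp m k₁ Z τ a (t - h) ω := by
  simp [wvec]

theorem sum_mul_wvec (v : Fin (k₂ + 2) → ℝ) :
    ∑ i, v i * wvec m k₁ k₂ Z τ a t i ω
      = v 0 + ∑ h : Fin (k₂ + 1), v h.succ * comp m k₁ Z τ a (t - h) ω := by
  simp [Fin.sum_univ_succ, wvec]

theorem recon_apply (D : Matrix (Fin (k₂ + 2)) (Fin m) ℝ) (j : Fin m) :
    recon m k₁ k₂ Z τ a D t ω j = ∑ i, D i j * wvec m k₁ k₂ Z τ a t i ω := by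
  rw [sum_mul_wvec]
  rfl

end Components

section SecondMoment

variable {m k₁ k₂} {μ : Measure Ω} {Z : Ω → EuclideanSpace ℝ (Fin m)} {τ : Ω → Ω}

theorem memLp_zproc_apply (hτ : MeasurePreserving τ μ μ) (hZ : MemLp Z 2 μ) (t : ℕ)
    (j : Fin m) : MemLp (fun ω => zproc m Z τ t ω j) 2 μ :=
  (EuclideanSpace.proj (𝕜 := ℝ) j).comp_memLp' (hZ.comp_measurePreserving (hτ.iterate t))

theorem memLp_comp (hτ : MeasurePreserving τ μ μ) (hZ : MemLp Z 2 μ)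
    (a : EuclideanSpace ℝ (Fin (k₁ + 1) × Fin m)) (t : ℕ) :
    MemLp (comp m k₁ Z τ a t) 2 μ :=
  memLp_finsetSum _ fun _ _ => memLp_finsetSum _ fun _ _ =>
    (memLp_zproc_apply hτ hZ _ _).const_mul _

theorem memLp_wvec [IsFiniteMeasure μ] (hτ : MeasurePreserving τ μ μ) (hZ : MemLp Z 2 μ)
    (a : EuclideanSpace ℝ (Fin (k₁ + 1) × Fin m)) (t : ℕ) (i : Fin (k₂ + 2)) :
    MemLp (wvec m k₁ k₂ Z τ a t i) 2 μ := by
  cases i using Fin.cases with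
  | zero => exact memLp_const 1
  | succ h =>
    rw [show wvec m k₁ k₂ Z τ a t h.succ = comp m k₁ Z τ a (t - h) from
      funext fun _ => wvec_succ h]
    exact memLp_comp hτ hZ a _

theorem memLp_sum_mul_wvec [IsFiniteMeasure μ] (hτ : MeasurePreserving τ μ μ)
    (hZ : MemLp Z 2 μ) (a : EuclideanSpace ℝ (Fin (k₁ + 1) × Fin m)) (t : ℕ)
    (v : Fin (k₂ + 2) → ℝ) :
    MemLp (fun ω => ∑ i, v i * wvec m k₁ k₂ Z τ a t i ω) 2 μ :=
  memLp_finsetSum _ fun i _ => (memLp_wvec hτ hZ a t i).const_mul _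

theorem memLp_recon_apply [IsFiniteMeasure μ] (hτ : MeasurePreserving τ μ μ)
    (hZ : MemLp Z 2 μ) (a : EuclideanSpace ℝ (Fin (k₁ + 1) × Fin m))
    (D : Matrix (Fin (k₂ + 2)) (Fin m) ℝ) (t : ℕ) (j : Fin m) :
    MemLp (fun ω => recon m k₁ k₂ Z τ a D t ω j) 2 μ := by
  simpa only [recon_apply] using memLp_sum_mul_wvec hτ hZ a t (fun i => D i j)

/-- The quadratic form `v ↦ v' S(a) v` of the second-moment matrix `Smat`. -/
def secondMomentForm (μ : Measure Ω) (Z : Ω → EuclideanSpace ℝ (Fin m)) (τ : Ω → Ω)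
    (a : EuclideanSpace ℝ (Fin (k₁ + 1) × Fin m)) (v : EuclideanSpace ℝ (Fin (k₂ + 2))) : ℝ :=
  ∫ ω, (∑ i, v i * wvec m k₁ k₂ Z τ a (k₁ + k₂) i ω) ^ 2 ∂μ

theorem secondMomentForm_smul (a : EuclideanSpace ℝ (Fin (k₁ + 1) × Fin m)) (s : ℝ)
    (v : EuclideanSpace ℝ (Fin (k₂ + 2))) :
    secondMomentForm μ Z τ a (s • v) = s ^ 2 * secondMomentForm μ Z τ a v := by
  simp_rw [secondMomentForm, ← integral_const_mul, PiLp.smul_apply, smul_eq_mul, mul_assoc,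
    ← Finset.mul_sum, mul_pow]

theorem continuous_secondMomentForm [IsFiniteMeasure μ] (hτ : MeasurePreserving τ μ μ)
    (hZ : MemLp Z 2 μ) :
    Continuous (Function.uncurry (secondMomentForm (k₁ := k₁) (k₂ := k₂) μ Z τ)) := by
  let U : Option (Fin (k₂ + 1) × Fin (k₁ + 1) × Fin m) → Ω → ℝ := fun s ω =>
    s.elim 1 fun x => zproc m Z τ (k₁ + k₂ - x.1 - x.2.1) ω x.2.2
  let c : EuclideanSpace ℝ (Fin (k₁ + 1) × Fin m) × EuclideanSpace ℝ (Fin (k₂ + 2)) →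
      Option (Fin (k₂ + 1) × Fin (k₁ + 1) × Fin m) → ℝ :=
    fun p s => s.elim (p.2 0) fun x => p.2 x.1.succ * p.1 x.2
  have hexp : Function.uncurry (secondMomentForm (k₁ := k₁) (k₂ := k₂) μ Z τ)
      = fun p => ∫ ω, (∑ s, c p s * U s ω) ^ 2 ∂μ := by
    ext ⟨a, v⟩
    simp only [Function.uncurry_apply_pair, secondMomentForm, sum_mul_wvec, comp_eq_sum_prod,
      Fintype.sum_option, Fintype.sum_prod_type, Finset.mul_sum, c, U, Option.elim, mul_one,
      mul_assoc]
  rw [hexp]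
  refine continuous_integral_sq_sum_mul (fun s => ?_) (continuous_pi fun s => ?_)
  · cases s with
    | none => exact memLp_const 1
    | some x => exact memLp_zproc_apply hτ hZ _ _
  · cases s <;> simp only [c, Option.elim] <;> fun_prop

end SecondMoment

section Bounds

variable {m k₁ k₂} {μ : Measure Ω} {Z : Ω → EuclideanSpace ℝ (Fin m)} {τ : Ω → Ω}
  {a : EuclideanSpace ℝ (Fin (k₁ + 1) × Fin m)}

theorem secondMomentForm_pos [IsProbabilityMeasure μ] (hτ : MeasurePreserving τ μ μ)
    (hZ : MemLp Z 2 μ) (hcond : Condition1 m k₁ k₂ μ Z τ) (ha : ‖a‖ = 1)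
    {v : EuclideanSpace ℝ (Fin (k₂ + 2))} (hv : v ≠ 0) :
    0 < secondMomentForm μ Z τ a v := by
  obtain ⟨η, hη, hc⟩ := hcond
  refine (integral_nonneg fun ω => sq_nonneg _).lt_of_ne fun h => ?_
  have hzero : ∀ᵐ ω ∂μ, (∑ i, v i * wvec m k₁ k₂ Z τ a (k₁ + k₂) i ω) ^ 2 = 0 :=
    (integral_eq_zero_iff_of_nonneg (fun ω => sq_nonneg _)
      (memLp_sum_mul_wvec hτ hZ a _ v).integrable_sq).1 h.symm
  -- `v ⬝ w(a) = 0` almost surely is the relation excluded by Condition 1 for this `v'`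
  set v' : Fin (k₂ + 2) → ℝ := Fin.snoc (fun h => v h.succ) (-v 0)
  have hv' : v' ≠ 0 := by
    refine fun h0 => hv (PiLp.ext fun i => ?_)
    cases i using Fin.cases with
    | zero => simpa [v'] using congrFun h0 (Fin.last _)
    | succ h => simpa [v'] using congrFun h0 h.castSucc
  have hprob : μ {ω | ∑ h : Fin (k₂ + 1), v' h.castSucc * comp m k₁ Z τ a (k₁ + k₂ - h) ω
      = v' (Fin.last (k₂ + 1))} = 1 := by
    rw [measure_congr (ae_eq_univ.2 (ae_iff.1 ?_)), measure_univ]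
    filter_upwards [hzero] with ω hω
    rw [sq_eq_zero_iff, sum_mul_wvec] at hω
    simp only [v', Fin.snoc_castSucc, Fin.snoc_last]
    linarith
  have := hc a ha v' hv'
  rw [hprob, ENNReal.toReal_one] at this
  linarith

theorem MSE₀_eq_sum [IsFiniteMeasure μ] (hτ : MeasurePreserving τ μ μ) (hZ : MemLp Z 2 μ)
    (D : Matrix (Fin (k₂ + 2)) (Fin m) ℝ) :
    MSE₀ m k₁ k₂ μ Z τ a D = ∑ j, ∫ ω, (zproc m Z τ (k₁ + k₂) ω j
      - recon m k₁ k₂ Z τ a D (k₁ + k₂) ω j) ^ 2 ∂μ := by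
  simp_rw [MSE₀, EuclideanSpace.norm_sq_eq, PiLp.sub_apply, Real.norm_eq_abs, sq_abs]
  exact integral_finsetSum _ fun j _ =>
    ((memLp_zproc_apply hτ hZ _ j).sub (memLp_recon_apply hτ hZ a D _ j)).integrable_sq

theorem le_MSE₀ [IsFiniteMeasure μ] (hτ : MeasurePreserving τ μ μ) (hZ : MemLp Z 2 μ)
    {c : ℝ}
    (hc : ∀ v : EuclideanSpace ℝ (Fin (k₂ + 2)), c * ‖v‖ ^ 2 ≤ secondMomentForm μ Z τ a v)
    (D : Matrix (Fin (k₂ + 2)) (Fin m) ℝ) :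
    c / 2 * frob D ^ 2 - ∑ j, ∫ ω, zproc m Z τ (k₁ + k₂) ω j ^ 2 ∂μ
      ≤ MSE₀ m k₁ k₂ μ Z τ a D := by
  let col (j : Fin m) : EuclideanSpace ℝ (Fin (k₂ + 2)) := WithLp.toLp 2 fun i => D i j
  have hfrob : frob D ^ 2 = ∑ j, ‖col j‖ ^ 2 := by
    rw [frob, Real.sq_sqrt (by positivity), Finset.sum_comm]
    simp [col, EuclideanSpace.norm_sq_eq]
  have hcol : ∀ j, ∫ ω, recon m k₁ k₂ Z τ a D (k₁ + k₂) ω j ^ 2 ∂μ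
      = secondMomentForm μ Z τ a (col j) := fun j => by
    simp [secondMomentForm, recon_apply, col]
  rw [MSE₀_eq_sum hτ hZ, hfrob, Finset.mul_sum, ← Finset.sum_sub_distrib]
  gcongr with j
  refine le_trans ?_ (half_integral_sq_sub_integral_sq_le (memLp_zproc_apply hτ hZ _ j)
    (memLp_recon_apply hτ hZ a D _ j))
  linarith [hc (col j), hcol j]

end Bounds

variable (μ : Measure Ω) [IsProbabilityMeasure μ]

theorem stmt1 (hm : 0 < m) (τ : Ω → Ω) (hτ : MeasurePreserving τ μ μ)
    (Z : Ω → EuclideanSpace ℝ (Fin m)) (hZ : MemLp Z 2 μ)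
    (hcond : Condition1 m k₁ k₂ μ Z τ) :
    ∀ R > (0 : ℝ), ∃ M : ℝ, ∀ D : Matrix (Fin (k₂ + 2)) (Fin m) ℝ, M ≤ frob D →
      R ≤ ⨅ a : { a : EuclideanSpace ℝ (Fin (k₁ + 1) × Fin m) // ‖a‖ = 1 },
            MSE₀ m k₁ k₂ μ Z τ a.1 D := by
  intro R hR
  obtain ⟨c, hc, hcG⟩ := exists_pos_mul_norm_sq_le_of_isCompact
    (isCompact_sphere (0 : EuclideanSpace ℝ (Fin (k₁ + 1) × Fin m)) 1)
    (continuous_secondMomentForm hτ hZ) secondMomentForm_smul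
    fun a ha _ hv => secondMomentForm_pos hτ hZ hcond (mem_sphere_zero_iff_norm.1 ha) hv
  set C := ∑ j, ∫ ω, zproc m Z τ (k₁ + k₂) ω j ^ 2 ∂μ
  have hC : 0 ≤ C := Finset.sum_nonneg fun j _ => integral_nonneg fun ω => sq_nonneg _
  refine ⟨√(2 * (R + C) / c), fun D hD => ?_⟩
  have hD2 : 2 * (R + C) / c ≤ frob D ^ 2 := by
    simpa [Real.sq_sqrt (by positivity : 0 ≤ 2 * (R + C) / c)]
      using pow_le_pow_left₀ (Real.sqrt_nonneg _) hD 2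
  have : Nonempty { a : EuclideanSpace ℝ (Fin (k₁ + 1) × Fin m) // ‖a‖ = 1 } :=
    ⟨⟨EuclideanSpace.single (0, ⟨0, hm⟩) 1, by simp⟩⟩
  refine le_ciInf fun a => le_trans ?_
    (le_MSE₀ hτ hZ (hcG a.1 (mem_sphere_zero_iff_norm.2 a.2)) D)
  calc R = c / 2 * (2 * (R + C) / c) - C := by field_simp; ring
    _ ≤ c / 2 * frob D ^ 2 - C := by gcongr

end ODPC
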